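/- Let W be a process on parties A', B', C', ... and Z a process on parties A'', B'', C'', ..., and form the combined parties A = A'A'' (with input a₁ = a₁'a₁'' and output a₂ = a₂'a₂''), B = B'B'', etc. The tensor product P = W ⊗ Z, regarded as an operator for the combined parties, is NOT a valid process if and only if there exist a nonzero nontrivial Hilbert–Schmidt term of W and a nonzero nontrivial Hilbert–Schmidt term of Z such that: (1) on every combined party where one of the two terms is trivial, the other term is either trivial or includes the out type; and (2) on every combined party where one of the two terms is the in type, the other term includes the out type. -/

import Mathlib

/-!
Expanding both processes in their Hilbert–Schmidt bases, `W ⊗ Z` is the expansion in the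
product basis with coefficient `w t * z s` on the combined term of `t` and `s`. Positivity and
the trace normalisation are inherited from the factors, and the product basis is again
trace-orthogonal, so these coefficients are the only ones. Hence `W ⊗ Z` is a process exactly
when every nonzero nontrivial combined term is in type on some party. A combined term fails to
be in type on a party exactly when (1) and (2) hold there. Finally, a violating pair cannot have
a trivial member: if `s` is trivial then `t` is nontrivial, hence in type on some party where `s`
does not include the out type, contradicting (2).
-/

open Matrix Kronecker BigOperators
open scoped ComplexOrder

namespace ProcessPaper

/-- A (generalized) Hilbert–Schmidt basis of operators on a finite-dimensional Hilbert
space with orthonormal basis indexed by `n`: a family of Hermitian matrices indexed by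
`ι` (with `Fintype.card ι = (Fintype.card n) ^ 2`), whose distinguished element `σ 0`
is the identity, whose other elements are traceless, which are mutually orthogonal
under the trace inner product, and which are all nonzero. -/
def IsHSBasis {n : Type*} [Fintype n] [DecidableEq n] {ι : Type*} [Fintype ι] [Zero ι]
    (σ : ι → Matrix n n ℂ) : Prop :=
  Fintype.card ι = (Fintype.card n) ^ 2 ∧
  (∀ i, (σ i).IsHermitian) ∧
  σ 0 = 1 ∧
  (∀ i, i ≠ 0 → (σ i).trace = 0) ∧
  (∀ i j, i ≠ j → (σ i * σ j).trace = 0) ∧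
  (∀ i, σ i ≠ 0)

variable {P : Type*} [Fintype P] [DecidableEq P]

section defs

variable {I O : P → Type*} [∀ p, Fintype (I p)] [∀ p, DecidableEq (I p)]
  [∀ p, Fintype (O p)] [∀ p, DecidableEq (O p)]
  {ιI ιO : P → Type*} [∀ p, Fintype (ιI p)] [∀ p, Zero (ιI p)]
  [∀ p, Fintype (ιO p)] [∀ p, Zero (ιO p)]

/-- The tensor product, over all parties, of party-local operators
(each party `p` carries the Hilbert space of its input system `I p`
tensored with its output system `O p`). -/
def tensorFamily (M : ∀ p, Matrix (I p × O p) (I p × O p) ℂ) :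
    Matrix ((p : P) → I p × O p) ((p : P) → I p × O p) ℂ :=
  fun x y => ∏ p, M p (x p) (y p)

/-- The Hilbert–Schmidt basis term with multi-index `t`:
`⨂_p σI p (t p).1 ⊗ σO p (t p).2`. -/
def hsTerm (σI : ∀ p, ιI p → Matrix (I p) (I p) ℂ)
    (σO : ∀ p, ιO p → Matrix (O p) (O p) ℂ)
    (t : ∀ p, ιI p × ιO p) :
    Matrix ((p : P) → I p × O p) ((p : P) → I p × O p) ℂ :=
  fun x y => ∏ p, σI p (t p).1 (x p).1 (y p).1 * σO p (t p).2 (x p).2 (y p).2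

/-- The operator with Hilbert–Schmidt coefficients `w`. -/
noncomputable def expand (σI : ∀ p, ιI p → Matrix (I p) (I p) ℂ)
    (σO : ∀ p, ιO p → Matrix (O p) (O p) ℂ)
    (w : (∀ p, ιI p × ιO p) → ℝ) :
    Matrix ((p : P) → I p × O p) ((p : P) → I p × O p) ℂ :=
  ∑ t : ∀ p, ιI p × ιO p, (w t : ℂ) • hsTerm σI σO t

end defs

section types

variable {ιI ιO : P → Type*} [∀ p, Zero (ιI p)] [∀ p, Zero (ιO p)]

/-- A term is trivial on party `p` if its indices on both the input and the output
system of `p` are zero (identity factor on party `p`). -/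
def TrivialAt (t : ∀ p, ιI p × ιO p) (p : P) : Prop :=
  (t p).1 = 0 ∧ (t p).2 = 0

/-- A term is in type on party `p` if it is nontrivial on the input system of `p`
and trivial (identity) on the output system of `p`. -/
def InTypeAt (t : ∀ p, ιI p × ιO p) (p : P) : Prop :=
  (t p).1 ≠ 0 ∧ (t p).2 = 0

/-- A term includes the out type on party `p` if it is nontrivial on the output
system of `p`. -/
def IncludesOutAt (t : ∀ p, ιI p × ιO p) (p : P) : Prop :=
  (t p).2 ≠ 0

/-- A term is nontrivial if it is nontrivial on some party
(i.e. it is not the identity term). -/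
def NontrivialTerm (t : ∀ p, ιI p × ιO p) : Prop :=
  ∃ p, ¬ TrivialAt t p

/-- The Oreshkov–Giarmatzi condition on Hilbert–Schmidt coefficients: every nonzero
nontrivial term is in type on at least one party. -/
def OGCoeffs (w : (∀ p, ιI p × ιO p) → ℝ) : Prop :=
  ∀ t, w t ≠ 0 → NontrivialTerm t → ∃ p, InTypeAt t p

end types

section process

variable {I O : P → Type*} [∀ p, Fintype (I p)] [∀ p, DecidableEq (I p)]
  [∀ p, Fintype (O p)] [∀ p, DecidableEq (O p)]
  {ιI ιO : P → Type*} [∀ p, Fintype (ιI p)] [∀ p, Zero (ιI p)]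
  [∀ p, Fintype (ιO p)] [∀ p, Zero (ιO p)]

/-- `W` is a valid process with Hilbert–Schmidt coefficients `w` (relative to the
Hilbert–Schmidt bases `σI`, `σO`): it is positive semidefinite, has trace equal to the
product `d_O` of the output dimensions, has expansion given by `w`, and every nonzero
nontrivial Hilbert–Schmidt term of it is in type on at least one party. -/
def IsProcessWith (σI : ∀ p, ιI p → Matrix (I p) (I p) ℂ)
    (σO : ∀ p, ιO p → Matrix (O p) (O p) ℂ)
    (W : Matrix ((p : P) → I p × O p) ((p : P) → I p × O p) ℂ)
    (w : (∀ p, ιI p × ιO p) → ℝ) : Prop :=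
  W.PosSemidef ∧
  W.trace = ∏ p, (Fintype.card (O p) : ℂ) ∧
  W = expand σI σO w ∧
  OGCoeffs w

/-- `W` is a valid process (relative to the Hilbert–Schmidt bases `σI`, `σO`). -/
def IsProcess (σI : ∀ p, ιI p → Matrix (I p) (I p) ℂ)
    (σO : ∀ p, ιO p → Matrix (O p) (O p) ℂ)
    (W : Matrix ((p : P) → I p × O p) ((p : P) → I p × O p) ℂ) : Prop :=
  ∃ w, IsProcessWith σI σO W w

end process

section product

variable {I' O' I'' O'' : P → Type*}

/-- The tensor product `P = W ⊗ Z` of an operator `W` for parties `A', B', …` and an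
operator `Z` for parties `A'', B'', …`, regarded as an operator for the combined
parties `A = A'A''` (input `a₁ = a₁'a₁''`, output `a₂ = a₂'a₂''`), `B = B'B''`, …. -/
def prodOp (W : Matrix ((p : P) → I' p × O' p) ((p : P) → I' p × O' p) ℂ)
    (Z : Matrix ((p : P) → I'' p × O'' p) ((p : P) → I'' p × O'' p) ℂ) :
    Matrix ((p : P) → (I' p × I'' p) × (O' p × O'' p))
      ((p : P) → (I' p × I'' p) × (O' p × O'' p)) ℂ :=
  fun x y =>
    W (fun p => ((x p).1.1, (x p).2.1)) (fun p => ((y p).1.1, (y p).2.1)) *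
    Z (fun p => ((x p).1.2, (x p).2.2)) (fun p => ((y p).1.2, (y p).2.2))

end product

/-- The Hilbert–Schmidt basis of a combined system, consisting of the tensor (Kronecker)
products of the basis elements of the two subsystems; its distinguished (identity)
element is the product of the two distinguished elements. -/
def prodBasis {n n' ι ι' : Type*} (σ : ι → Matrix n n ℂ) (σ' : ι' → Matrix n' n' ℂ) :
    ι × ι' → Matrix (n × n') (n × n') ℂ :=
  fun i => σ i.1 ⊗ₖ σ' i.2

section coeffs

variable {ιI' ιO' ιI'' ιO'' : P → Type*}

/-- The Hilbert–Schmidt coefficients of a tensor product `W ⊗ Z` in terms of the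
coefficients `w` of `W` and `z` of `Z`. -/
def prodCoeffs (w : (∀ p, ιI' p × ιO' p) → ℝ) (z : (∀ p, ιI'' p × ιO'' p) → ℝ) :
    (∀ p, (ιI' p × ιI'' p) × (ιO' p × ιO'' p)) → ℝ :=
  fun u => w (fun p => ((u p).1.1, (u p).2.1)) * z (fun p => ((u p).1.2, (u p).2.2))

/-- The multi-index of the tensor product of the term `t` of `W` and the term `s`
of `Z`, as a term for the combined parties. -/
def combineTerm (t : ∀ p, ιI' p × ιO' p) (s : ∀ p, ιI'' p × ιO'' p) :
    ∀ p, (ιI' p × ιI'' p) × (ιO' p × ιO'' p) :=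
  fun p => (((t p).1, (s p).1), ((t p).2, (s p).2))

end coeffs

section twoparty

variable {ιI ιO : Fin 2 → Type*} [∀ p, Zero (ιI p)] [∀ p, Zero (ιO p)]

/-- For two parties `A` (party `0`) and `B` (party `1`), an `A` to `B` signalling
term: a term of type `a₂b₁` or `a₁a₂b₁`, i.e. nontrivial on `a₂` and on `b₁` and
trivial on `b₂`. -/
def AtoBSig (t : ∀ p, ιI p × ιO p) : Prop :=
  (t 0).2 ≠ 0 ∧ (t 1).1 ≠ 0 ∧ (t 1).2 = 0

/-- A `B` to `A` signalling term: a term of type `a₁b₂` or `a₁b₁b₂`, i.e. nontrivial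
on `b₂` and on `a₁` and trivial on `a₂`. -/
def BtoASig (t : ∀ p, ιI p × ιO p) : Prop :=
  (t 1).2 ≠ 0 ∧ (t 0).1 ≠ 0 ∧ (t 0).2 = 0

end twoparty

theorem IsHSBasis.trace_mul_eq_zero_iff {n ι : Type*} [Fintype n] [DecidableEq n] [Fintype ι]
    [Zero ι] {σ : ι → Matrix n n ℂ} (hσ : IsHSBasis σ) (i j : ι) :
    (σ i * σ j).trace = 0 ↔ i ≠ j := by
  refine ⟨?_, hσ.2.2.2.2.1 i j⟩
  rintro h rfl
  nth_rw 1 [← (hσ.2.1 i).eq] at h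
  exact hσ.2.2.2.2.2 i (trace_conjTranspose_mul_self_eq_zero_iff.mp h)

theorem trace_prodBasis_mul_eq_zero_iff {n n' ι ι' : Type*} [Fintype n] [Fintype n']
    {σ : ι → Matrix n n ℂ} {σ' : ι' → Matrix n' n' ℂ}
    (hσ : ∀ i j, (σ i * σ j).trace = 0 ↔ i ≠ j) (hσ' : ∀ i j, (σ' i * σ' j).trace = 0 ↔ i ≠ j)
    (i j : ι × ι') : (prodBasis σ σ' i * prodBasis σ σ' j).trace = 0 ↔ i ≠ j := by
  rw [prodBasis, prodBasis, ← mul_kronecker_mul, trace_kronecker, mul_eq_zero, hσ, hσ', Ne, Ne,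
    ← not_and_or, ← Prod.ext_iff]

theorem coeffs_eq_of_sum_smul_eq {κ n : Type*} [Fintype κ] [Fintype n] {B : κ → Matrix n n ℂ}
    (hB : ∀ t s, (B t * B s).trace = 0 ↔ t ≠ s) {c c' : κ → ℂ}
    (h : ∑ t, c t • B t = ∑ t, c' t • B t) : c = c' := by
  have trace_mul_right (c : κ → ℂ) (s : κ) :
      ((∑ t, c t • B t) * B s).trace = c s * (B s * B s).trace := by
    simp only [Finset.sum_mul, trace_sum, smul_mul, trace_smul, smul_eq_mul]
    refine Finset.sum_eq_single s (fun t _ hts => ?_) (by simp)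
    rw [(hB t s).mpr hts, mul_zero]
  funext s
  have hs := trace_mul_right c s
  rw [h, trace_mul_right c' s] at hs
  exact (mul_right_cancel₀ (mt (hB s s).mp (· rfl)) hs).symm

theorem hsTerm_eq_tensorFamily {P : Type*} {I O ιI ιO : P → Type*} [Fintype P]
    (σI : ∀ p, ιI p → Matrix (I p) (I p) ℂ) (σO : ∀ p, ιO p → Matrix (O p) (O p) ℂ)
    (t : ∀ p, ιI p × ιO p) :
    hsTerm σI σO t = tensorFamily fun p => σI p (t p).1 ⊗ₖ σO p (t p).2 := rfl

section HSTerms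

variable {P : Type*} [Fintype P] [DecidableEq P]
  {I O : P → Type*} [∀ p, Fintype (I p)] [∀ p, Fintype (O p)] {ιI ιO : P → Type*}

theorem tensorFamily_mul (M N : ∀ p, Matrix (I p × O p) (I p × O p) ℂ) :
    tensorFamily M * tensorFamily N = tensorFamily fun p => M p * N p := by
  ext x y
  simp only [tensorFamily, mul_apply]
  rw [Finset.prod_univ_sum, Fintype.piFinset_univ]
  exact Finset.sum_congr rfl fun z _ => Finset.prod_mul_distrib.symm

theorem trace_tensorFamily (M : ∀ p, Matrix (I p × O p) (I p × O p) ℂ) :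
    (tensorFamily M).trace = ∏ p, (M p).trace := by
  simp only [trace, diag, tensorFamily]
  rw [Finset.prod_univ_sum, Fintype.piFinset_univ]

theorem trace_hsTerm_mul_eq_zero_iff {σI : ∀ p, ιI p → Matrix (I p) (I p) ℂ}
    {σO : ∀ p, ιO p → Matrix (O p) (O p) ℂ}
    (hI : ∀ p i j, (σI p i * σI p j).trace = 0 ↔ i ≠ j)
    (hO : ∀ p i j, (σO p i * σO p j).trace = 0 ↔ i ≠ j) (t s : ∀ p, ιI p × ιO p) :
    (hsTerm σI σO t * hsTerm σI σO s).trace = 0 ↔ t ≠ s := by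
  simp only [hsTerm_eq_tensorFamily, tensorFamily_mul, trace_tensorFamily, ← mul_kronecker_mul,
    trace_kronecker, Finset.prod_eq_zero_iff, Finset.mem_univ, true_and, mul_eq_zero, hI, hO,
    ← not_and_or, ← Prod.ext_iff, Ne, ← not_forall, funext_iff]

theorem expand_injective [∀ p, Fintype (ιI p)] [∀ p, Zero (ιI p)]
    [∀ p, Fintype (ιO p)] [∀ p, Zero (ιO p)] {σI : ∀ p, ιI p → Matrix (I p) (I p) ℂ}
    {σO : ∀ p, ιO p → Matrix (O p) (O p) ℂ}
    (hI : ∀ p i j, (σI p i * σI p j).trace = 0 ↔ i ≠ j)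
    (hO : ∀ p i j, (σO p i * σO p j).trace = 0 ↔ i ≠ j) :
    Function.Injective (expand σI σO) := fun _ _ h =>
  funext fun t => Complex.ofReal_injective <|
    congrFun (coeffs_eq_of_sum_smul_eq (trace_hsTerm_mul_eq_zero_iff hI hO) h) t

end HSTerms

def splitEquiv {P : Type*} (α β γ δ : P → Type*) :
    ((p : P) → (α p × β p) × (γ p × δ p)) ≃ (∀ p, α p × γ p) × (∀ p, β p × δ p) where
  toFun u := (fun p => ((u p).1.1, (u p).2.1), fun p => ((u p).1.2, (u p).2.2))
  invFun v := combineTerm v.1 v.2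
  left_inv _ := rfl
  right_inv _ := rfl

theorem prodOp_eq_submatrix {P : Type*} {I' O' I'' O'' : P → Type*}
    (W : Matrix ((p : P) → I' p × O' p) ((p : P) → I' p × O' p) ℂ)
    (Z : Matrix ((p : P) → I'' p × O'' p) ((p : P) → I'' p × O'' p) ℂ) :
    prodOp W Z = (W ⊗ₖ Z).submatrix (splitEquiv I' I'' O' O'') (splitEquiv I' I'' O' O'') :=
  rfl

theorem prodOp_hsTerm {P : Type*} [Fintype P] {I' O' I'' O'' ιI' ιO' ιI'' ιO'' : P → Type*}
    (σI' : ∀ p, ιI' p → Matrix (I' p) (I' p) ℂ) (σO' : ∀ p, ιO' p → Matrix (O' p) (O' p) ℂ)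
    (σI'' : ∀ p, ιI'' p → Matrix (I'' p) (I'' p) ℂ)
    (σO'' : ∀ p, ιO'' p → Matrix (O'' p) (O'' p) ℂ)
    (t : ∀ p, ιI' p × ιO' p) (s : ∀ p, ιI'' p × ιO'' p) :
    prodOp (hsTerm σI' σO' t) (hsTerm σI'' σO'' s)
      = hsTerm (fun p => prodBasis (σI' p) (σI'' p)) (fun p => prodBasis (σO' p) (σO'' p))
          (combineTerm t s) := by
  ext x y
  simp only [prodOp, hsTerm, prodBasis, combineTerm, kroneckerMap_apply, ← Finset.prod_mul_distrib]
  exact Finset.prod_congr rfl fun p _ => by ring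

theorem prodOp_expand {P : Type*} [Fintype P] [DecidableEq P]
    {I' O' I'' O'' ιI' ιO' ιI'' ιO'' : P → Type*} [∀ p, Fintype (ιI' p)]
    [∀ p, Fintype (ιO' p)] [∀ p, Fintype (ιI'' p)] [∀ p, Fintype (ιO'' p)]
    (σI' : ∀ p, ιI' p → Matrix (I' p) (I' p) ℂ) (σO' : ∀ p, ιO' p → Matrix (O' p) (O' p) ℂ)
    (σI'' : ∀ p, ιI'' p → Matrix (I'' p) (I'' p) ℂ)
    (σO'' : ∀ p, ιO'' p → Matrix (O'' p) (O'' p) ℂ)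
    (w : (∀ p, ιI' p × ιO' p) → ℝ) (z : (∀ p, ιI'' p × ιO'' p) → ℝ) :
    prodOp (expand σI' σO' w) (expand σI'' σO'' z)
      = expand (fun p => prodBasis (σI' p) (σI'' p)) (fun p => prodBasis (σO' p) (σO'' p))
          (prodCoeffs w z) := by
  ext x y
  conv_rhs => rw [expand, ← (splitEquiv ιI' ιI'' ιO' ιO'').symm.sum_comp, Fintype.sum_prod_type]
  simp only [prodOp, expand, Matrix.sum_apply, Matrix.smul_apply, smul_eq_mul, Finset.sum_mul_sum]
  refine Finset.sum_congr rfl fun t _ => Finset.sum_congr rfl fun s _ => ?_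
  change _ = (prodCoeffs w z (combineTerm t s) : ℂ) * hsTerm _ _ (combineTerm t s) x y
  rw [← prodOp_hsTerm]
  simp only [prodOp, prodCoeffs, combineTerm, Complex.ofReal_mul]
  ring

section TensorProduct

variable {P : Type*} [Fintype P] {I' O' I'' O'' : P → Type*}
  [∀ p, Fintype (I' p)] [∀ p, Fintype (O' p)] [∀ p, Fintype (I'' p)] [∀ p, Fintype (O'' p)]

theorem posSemidef_prodOp [∀ p, DecidableEq (I' p)] [∀ p, DecidableEq (O' p)]
    [∀ p, DecidableEq (I'' p)] [∀ p, DecidableEq (O'' p)]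
    {W : Matrix ((p : P) → I' p × O' p) ((p : P) → I' p × O' p) ℂ}
    {Z : Matrix ((p : P) → I'' p × O'' p) ((p : P) → I'' p × O'' p) ℂ}
    (hW : W.PosSemidef) (hZ : Z.PosSemidef) : (prodOp W Z).PosSemidef := by
  rw [prodOp_eq_submatrix]
  exact (hW.kronecker hZ).submatrix _

theorem trace_prodOp [DecidableEq P]
    (W : Matrix ((p : P) → I' p × O' p) ((p : P) → I' p × O' p) ℂ)
    (Z : Matrix ((p : P) → I'' p × O'' p) ((p : P) → I'' p × O'' p) ℂ) :
    (prodOp W Z).trace = W.trace * Z.trace := by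
  rw [prodOp_eq_submatrix, ← trace_kronecker]
  exact (splitEquiv I' I'' O' O'').sum_comp fun v => (W ⊗ₖ Z) v v

end TensorProduct

section TermTypes

variable {P : Type*} {ιI' ιO' ιI'' ιO'' : P → Type*} [∀ p, Zero (ιI' p)] [∀ p, Zero (ιO' p)]
  [∀ p, Zero (ιI'' p)] [∀ p, Zero (ιO'' p)]

theorem not_inTypeAt_combineTerm_iff (t : ∀ p, ιI' p × ιO' p) (s : ∀ p, ιI'' p × ιO'' p)
    (p : P) :
    ¬ InTypeAt (combineTerm t s) p ↔
      ((TrivialAt t p → TrivialAt s p ∨ IncludesOutAt s p) ∧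
        (TrivialAt s p → TrivialAt t p ∨ IncludesOutAt t p)) ∧
      ((InTypeAt t p → IncludesOutAt s p) ∧ (InTypeAt s p → IncludesOutAt t p)) := by
  simp only [InTypeAt, TrivialAt, IncludesOutAt, combineTerm, Ne, Prod.mk_eq_zero]
  tauto

theorem nontrivialTerm_combineTerm_iff {t : ∀ p, ιI' p × ιO' p} {s : ∀ p, ιI'' p × ιO'' p} :
    NontrivialTerm (combineTerm t s) ↔ NontrivialTerm t ∨ NontrivialTerm s := by
  simp only [NontrivialTerm, TrivialAt, combineTerm, Prod.mk_eq_zero, ← exists_or]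
  exact exists_congr fun p => by tauto

theorem not_ogCoeffs_prodCoeffs_iff {w : (∀ p, ιI' p × ιO' p) → ℝ}
    {z : (∀ p, ιI'' p × ιO'' p) → ℝ} (hw : OGCoeffs w) (hz : OGCoeffs z) :
    ¬ OGCoeffs (prodCoeffs w z) ↔ ∃ t s, w t ≠ 0 ∧ z s ≠ 0 ∧ NontrivialTerm t ∧ NontrivialTerm s ∧
      (∀ p, (TrivialAt t p → TrivialAt s p ∨ IncludesOutAt s p) ∧
            (TrivialAt s p → TrivialAt t p ∨ IncludesOutAt t p)) ∧
      (∀ p, (InTypeAt t p → IncludesOutAt s p) ∧ (InTypeAt s p → IncludesOutAt t p)) := by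
  simp only [OGCoeffs, not_forall, not_exists, exists_prop]
  rw [(splitEquiv ιI' ιI'' ιO' ιO'').exists_congr_left, Prod.exists]
  change (∃ t s, prodCoeffs w z (combineTerm t s) ≠ 0 ∧ NontrivialTerm (combineTerm t s) ∧
    ∀ p, ¬ InTypeAt (combineTerm t s) p) ↔ _
  simp only [not_inTypeAt_combineTerm_iff, nontrivialTerm_combineTerm_iff]
  constructor
  · rintro ⟨t, s, hts, hnt, hcond⟩
    obtain ⟨hcond₁, hcond₂⟩ := forall_and.mp hcond
    obtain ⟨ht, hs⟩ := mul_ne_zero_iff.mp hts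
    have ht_nontrivial : NontrivialTerm s → NontrivialTerm t := fun hns =>
      let ⟨p, hp⟩ := hz s hs hns
      ⟨p, fun htp => (hcond₂ p).2 hp htp.2⟩
    have hs_nontrivial : NontrivialTerm t → NontrivialTerm s := fun hnt =>
      let ⟨p, hp⟩ := hw t ht hnt
      ⟨p, fun hsp => (hcond₂ p).1 hp hsp.2⟩
    exact ⟨t, s, ht, hs, hnt.elim id ht_nontrivial, hnt.elim hs_nontrivial id, hcond₁, hcond₂⟩
  · rintro ⟨t, s, ht, hs, hnt, -, hcond₁, hcond₂⟩
    exact ⟨t, s, mul_ne_zero ht hs, Or.inl hnt, fun p => ⟨hcond₁ p, hcond₂ p⟩⟩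

end TermTypes

section Statement1

variable {P : Type*} [Fintype P] [DecidableEq P]
  {I' O' I'' O'' : P → Type*}
  [∀ p, Fintype (I' p)] [∀ p, DecidableEq (I' p)]
  [∀ p, Fintype (O' p)] [∀ p, DecidableEq (O' p)]
  [∀ p, Fintype (I'' p)] [∀ p, DecidableEq (I'' p)]
  [∀ p, Fintype (O'' p)] [∀ p, DecidableEq (O'' p)]
  {ιI' ιO' ιI'' ιO'' : P → Type*}
  [∀ p, Fintype (ιI' p)] [∀ p, Zero (ιI' p)]
  [∀ p, Fintype (ιO' p)] [∀ p, Zero (ιO' p)]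
  [∀ p, Fintype (ιI'' p)] [∀ p, Zero (ιI'' p)]
  [∀ p, Fintype (ιO'' p)] [∀ p, Zero (ιO'' p)]

theorem isProcess_prodOp_iff
    {σI' : ∀ p, ιI' p → Matrix (I' p) (I' p) ℂ} {σO' : ∀ p, ιO' p → Matrix (O' p) (O' p) ℂ}
    {σI'' : ∀ p, ιI'' p → Matrix (I'' p) (I'' p) ℂ}
    {σO'' : ∀ p, ιO'' p → Matrix (O'' p) (O'' p) ℂ}
    (hσI' : ∀ p, IsHSBasis (σI' p)) (hσO' : ∀ p, IsHSBasis (σO' p))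
    (hσI'' : ∀ p, IsHSBasis (σI'' p)) (hσO'' : ∀ p, IsHSBasis (σO'' p))
    {W : Matrix ((p : P) → I' p × O' p) ((p : P) → I' p × O' p) ℂ}
    {Z : Matrix ((p : P) → I'' p × O'' p) ((p : P) → I'' p × O'' p) ℂ}
    {w : (∀ p, ιI' p × ιO' p) → ℝ} {z : (∀ p, ιI'' p × ιO'' p) → ℝ}
    (hW : IsProcessWith σI' σO' W w) (hZ : IsProcessWith σI'' σO'' Z z) :
    IsProcess (fun p => prodBasis (σI' p) (σI'' p)) (fun p => prodBasis (σO' p) (σO'' p))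
        (prodOp W Z) ↔ OGCoeffs (prodCoeffs w z) := by
  obtain ⟨hWpsd, hWtr, hWexp, -⟩ := hW
  obtain ⟨hZpsd, hZtr, hZexp, -⟩ := hZ
  have hexp : prodOp W Z = expand (fun p => prodBasis (σI' p) (σI'' p))
      (fun p => prodBasis (σO' p) (σO'' p)) (prodCoeffs w z) := by
    rw [hWexp, hZexp, prodOp_expand]
  constructor
  · rintro ⟨u, -, -, hu, hog⟩
    have hI p := trace_prodBasis_mul_eq_zero_iff (hσI' p).trace_mul_eq_zero_iff
      (hσI'' p).trace_mul_eq_zero_iff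
    have hO p := trace_prodBasis_mul_eq_zero_iff (hσO' p).trace_mul_eq_zero_iff
      (hσO'' p).trace_mul_eq_zero_iff
    rwa [expand_injective hI hO (hu.symm.trans hexp)] at hog
  · intro hog
    refine ⟨_, posSemidef_prodOp hWpsd hZpsd, ?_, hexp, hog⟩
    rw [trace_prodOp, hWtr, hZtr, ← Finset.prod_mul_distrib]
    simp only [Fintype.card_prod, Nat.cast_mul]

/-- **Proposition 2.** Let `W` be a process on parties `A', B', …` and `Z` a process on
parties `A'', B'', …` (with Hilbert–Schmidt coefficients `w` and `z` respectively), and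
form the combined parties `A = A'A''` (input `a₁ = a₁'a₁''`, output `a₂ = a₂'a₂''`),
`B = B'B''`, …. The tensor product `P = W ⊗ Z`, regarded as an operator for the
combined parties, is NOT a valid process if and only if there exist a nonzero
nontrivial Hilbert–Schmidt term of `W` and a nonzero nontrivial Hilbert–Schmidt term
of `Z` such that: (1) on every combined party where one of the two terms is trivial,
the other term is either trivial or includes the out type; and (2) on every combined
party where one of the two terms is the in type, the other term includes the out
type. -/
theorem statement1
    (σI' : ∀ p, ιI' p → Matrix (I' p) (I' p) ℂ)
    (σO' : ∀ p, ιO' p → Matrix (O' p) (O' p) ℂ)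
    (σI'' : ∀ p, ιI'' p → Matrix (I'' p) (I'' p) ℂ)
    (σO'' : ∀ p, ιO'' p → Matrix (O'' p) (O'' p) ℂ)
    (hσI' : ∀ p, IsHSBasis (σI' p)) (hσO' : ∀ p, IsHSBasis (σO' p))
    (hσI'' : ∀ p, IsHSBasis (σI'' p)) (hσO'' : ∀ p, IsHSBasis (σO'' p))
    (W : Matrix ((p : P) → I' p × O' p) ((p : P) → I' p × O' p) ℂ)
    (Z : Matrix ((p : P) → I'' p × O'' p) ((p : P) → I'' p × O'' p) ℂ)
    (w : (∀ p, ιI' p × ιO' p) → ℝ) (z : (∀ p, ιI'' p × ιO'' p) → ℝ)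
    (hW : IsProcessWith σI' σO' W w) (hZ : IsProcessWith σI'' σO'' Z z) :
    ¬ IsProcess (fun p => prodBasis (σI' p) (σI'' p))
        (fun p => prodBasis (σO' p) (σO'' p)) (prodOp W Z)
      ↔ ∃ t s, w t ≠ 0 ∧ z s ≠ 0 ∧ NontrivialTerm t ∧ NontrivialTerm s ∧
          (∀ p, (TrivialAt t p → TrivialAt s p ∨ IncludesOutAt s p) ∧
                (TrivialAt s p → TrivialAt t p ∨ IncludesOutAt t p)) ∧
          (∀ p, (InTypeAt t p → IncludesOutAt s p) ∧
                (InTypeAt s p → IncludesOutAt t p)) := by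
  rw [isProcess_prodOp_iff hσI' hσO' hσI'' hσO'' hW hZ,
    not_ogCoeffs_prodCoeffs_iff hW.2.2.2 hZ.2.2.2]

end Statement1

end ProcessPaper
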